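/- For fixed n > 0 and λ ≥ 0 and any 0 < u ≤ u' < 1: Pr[χ'²_n(λ) ≥ Ψ̄_n^{-1}(u)] / u ≥ Pr[χ'²_n(λ) ≥ Ψ̄_n^{-1}(u')] / u'; in particular, for the BH constants α_r = rα_1, Pr[χ'²_n(λ) ≥ Ψ̄_n^{-1}(α_{r+1})] / (r+1) ≤ α_1 · Pr[χ'²_n(λ) ≥ Ψ̄_n^{-1}(α_1)] / α_1 holds for every r ≥ 0. -/

import Mathlib

/-- Chi-squared density with `n > 0` degrees of freedom. -/
noncomputable def chiPDF (n y : ℝ) : ℝ :=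
  if 0 < y then Real.exp (-y / 2) * y ^ (n / 2 - 1) / (2 ^ (n / 2) * Real.Gamma (n / 2)) else 0

/-- Chi-squared survival function `Ψ̄_n`. -/
noncomputable def chiSurv (n x : ℝ) : ℝ := ∫ t in Set.Ioi x, chiPDF n t

/-- Non-central chi-squared density: Poisson(lam/2) mixture of central densities. -/
noncomputable def ncChiPDF (n lam y : ℝ) : ℝ :=
  ∑' j : ℕ, Real.exp (-lam / 2) * (lam / 2) ^ j / (Nat.factorial j) * chiPDF (n + 2 * j) y

/-- Non-central chi-squared survival function. -/
noncomputable def ncChiSurv (n lam x : ℝ) : ℝ := ∫ t in Set.Ioi x, ncChiPDF n lam t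

/-! For `y > 0` the non-central density is the central one times the likelihood ratio
`h(y) = Σ_j w_j y^j`, a power series with nonnegative coefficients, hence nondecreasing in `y`.
A nondecreasing likelihood ratio makes `x ↦ Pr[χ'²_n(λ) > x] / Ψ̄_n(x)` nondecreasing: for
`x' ≤ x`, split the tail at `x` and compare `h` with the constant `h(x)`, which bounds it from
above on `(x', x]` and from below on `(x, ∞)`. Since `Ψ̄_n` is nonincreasing, `u < u'` forces
`Ψ̄_n⁻¹(u') ≤ Ψ̄_n⁻¹(u)`, and evaluating the monotone ratio at these two points gives the first
claim; the second is the case `u = α₁ ≤ u' = (r + 1) α₁`. -/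

open MeasureTheory ProbabilityTheory Real Set

theorem integrable_tsum_of_nonneg {α ι : Type*} [MeasurableSpace α] [Countable ι]
    {μ : Measure α} {f : ι → α → ℝ} (hf : ∀ i, Integrable (f i) μ) (hf0 : ∀ i x, 0 ≤ f i x)
    (hsum : Summable fun i ↦ ∫ x, f i x ∂μ) : Integrable (fun x ↦ ∑' i, f i x) μ := by
  have hmeas : ∀ i, AEMeasurable (fun x ↦ ENNReal.ofReal (f i x)) μ :=
    fun i ↦ (hf i).aemeasurable.ennreal_ofReal
  have hfin : ∫⁻ x, ∑' i, ENNReal.ofReal (f i x) ∂μ ≠ ⊤ := by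
    rw [lintegral_tsum hmeas]
    simp_rw [← ofReal_integral_eq_lintegral_ofReal (hf _) (ae_of_all _ (hf0 _))]
    rw [← ENNReal.ofReal_tsum_of_nonneg (fun i ↦ integral_nonneg (hf0 i)) hsum]
    exact ENNReal.ofReal_ne_top
  convert integrable_toReal_of_lintegral_ne_top (AEMeasurable.tsum hmeas) hfin with x
  rw [ENNReal.tsum_toReal_eq fun i ↦ ENNReal.ofReal_ne_top]
  simp_rw [ENNReal.toReal_ofReal (hf0 _ x)]

theorem antitone_setIntegral_Ioi {μ : Measure ℝ} {f : ℝ → ℝ} (hf0 : ∀ t, 0 ≤ f t)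
    (hf : Integrable f μ) : Antitone fun x ↦ ∫ t in Ioi x, f t ∂μ := fun _ _ hxy ↦
  setIntegral_mono_set hf.integrableOn (ae_of_all _ hf0) (Ioi_subset_Ioi hxy).eventuallyLE

theorem integral_Ioi_mul_integral_Ioi_le_of_monotone {μ : Measure ℝ} {g h : ℝ → ℝ} {x' x : ℝ}
    (hx : x' ≤ x) (hg0 : ∀ t, 0 ≤ g t) (hg : IntegrableOn g (Ioi x') μ)
    (hgh : IntegrableOn (fun t ↦ g t * h t) (Ioi x') μ) (hh : Monotone h) :
    (∫ t in Ioi x, g t ∂μ) * ∫ t in Ioi x', g t * h t ∂μ ≤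
      (∫ t in Ioi x', g t ∂μ) * ∫ t in Ioi x, g t * h t ∂μ := by
  have hIoc : Ioc x' x ⊆ Ioi x' := Ioc_subset_Ioi_self
  have hIoi : Ioi x ⊆ Ioi x' := Ioi_subset_Ioi hx
  have hgm : IntervalIntegrable g μ x' x :=
    (intervalIntegrable_iff_integrableOn_Ioc_of_le hx).2 (hg.mono_set hIoc)
  have hghm : IntervalIntegrable (fun t ↦ g t * h t) μ x' x :=
    (intervalIntegrable_iff_integrableOn_Ioc_of_le hx).2 (hgh.mono_set hIoc)
  rw [← intervalIntegral.integral_interval_add_Ioi hg (hg.mono_set hIoi),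
    ← intervalIntegral.integral_interval_add_Ioi hgh (hgh.mono_set hIoi)]
  have hmid : ∫ t in x'..x, g t * h t ∂μ ≤ h x * ∫ t in x'..x, g t ∂μ := by
    rw [← intervalIntegral.integral_const_mul]
    refine intervalIntegral.integral_mono_on hx hghm (hgm.const_mul _) fun t ht ↦ ?_
    rw [mul_comm]
    exact mul_le_mul_of_nonneg_right (hh ht.2) (hg0 t)
  have htail : h x * ∫ t in Ioi x, g t ∂μ ≤ ∫ t in Ioi x, g t * h t ∂μ := by
    rw [← integral_const_mul]
    refine setIntegral_mono_on ((hg.mono_set hIoi).const_mul _) (hgh.mono_set hIoi)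
      measurableSet_Ioi fun t ht ↦ ?_
    rw [mul_comm (g t)]
    exact mul_le_mul_of_nonneg_right (hh (le_of_lt ht)) (hg0 t)
  have hGm : 0 ≤ ∫ t in x'..x, g t ∂μ := intervalIntegral.integral_nonneg hx fun t _ ↦ hg0 t
  have hGA : 0 ≤ ∫ t in Ioi x, g t ∂μ := setIntegral_nonneg measurableSet_Ioi fun t _ ↦ hg0 t
  nlinarith [mul_le_mul_of_nonneg_left hmid hGA, mul_le_mul_of_nonneg_left htail hGm]

theorem Real.min_one_mul_Gamma_le_Gamma_add_nat {s : ℝ} (hs : 0 < s) (j : ℕ) :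
    min s 1 * Gamma s ≤ Gamma (s + j) := by
  have hΓ := Gamma_pos_of_pos hs
  induction j with
  | zero => simpa using mul_le_of_le_one_left hΓ.le (min_le_right s 1)
  | succ k ih =>
    rw [Nat.cast_succ, ← add_assoc, Gamma_add_one (by positivity)]
    rcases k with _ | k
    · simpa using mul_le_mul_of_nonneg_right (min_le_left s 1) hΓ.le
    · have hk : 1 ≤ s + (k + 1 : ℕ) := by push_cast; linarith
      exact ih.trans (le_mul_of_one_le_left (Gamma_pos_of_pos (by positivity)).le hk)

theorem integrable_gammaPDFReal {a r : ℝ} (ha : 0 < a) (hr : 0 < r) :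
    Integrable (gammaPDFReal a r) := by
  refine ⟨(measurable_gammaPDFReal a r).aestronglyMeasurable, ?_⟩
  rw [hasFiniteIntegral_iff_ofReal (ae_of_all _ (gammaPDFReal_nonneg ha hr))]
  exact (lintegral_gammaPDF_eq_one ha hr).trans_lt ENNReal.one_lt_top

theorem integral_gammaPDFReal {a r : ℝ} (ha : 0 < a) (hr : 0 < r) :
    ∫ x, gammaPDFReal a r x = 1 := by
  rw [integral_eq_lintegral_of_nonneg_ae (ae_of_all _ (gammaPDFReal_nonneg ha hr))
    (measurable_gammaPDFReal a r).aestronglyMeasurable]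
  exact congrArg ENNReal.toReal (lintegral_gammaPDF_eq_one ha hr)

theorem chiPDF_eq_gammaPDFReal (n : ℝ) {y : ℝ} (hy : y ≠ 0) :
    chiPDF n y = gammaPDFReal (n / 2) (1 / 2) y := by
  rcases hy.lt_or_gt with hneg | hpos
  · simp [chiPDF, gammaPDFReal, hneg.not_gt, hneg.not_ge]
  · simp only [chiPDF, gammaPDFReal, if_pos hpos, if_pos hpos.le, one_div,
      inv_rpow zero_le_two]
    ring_nf

theorem chiPDF_ae_eq_gammaPDFReal (n : ℝ) : chiPDF n =ᵐ[volume] gammaPDFReal (n / 2) (1 / 2) := by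
  filter_upwards [Measure.ae_ne volume 0] with y hy using chiPDF_eq_gammaPDFReal n hy

section ChiSquared

variable {n lam : ℝ}

theorem chiPDF_nonneg (hn : 0 < n) (y : ℝ) : 0 ≤ chiPDF n y := by
  have := Gamma_pos_of_pos (half_pos hn)
  unfold chiPDF
  split_ifs <;> positivity

theorem integrable_chiPDF (hn : 0 < n) : Integrable (chiPDF n) :=
  (integrable_gammaPDFReal (half_pos hn) one_half_pos).congr (chiPDF_ae_eq_gammaPDFReal n).symm

theorem integral_chiPDF (hn : 0 < n) : ∫ y, chiPDF n y = 1 := by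
  rw [integral_congr_ae (chiPDF_ae_eq_gammaPDFReal n),
    integral_gammaPDFReal (half_pos hn) one_half_pos]

theorem antitone_chiSurv (hn : 0 < n) : Antitone (chiSurv n) :=
  antitone_setIntegral_Ioi (chiPDF_nonneg hn) (integrable_chiPDF hn)

noncomputable def ncChiMixingWeight (lam : ℝ) (j : ℕ) : ℝ :=
  exp (-lam / 2) * (lam / 2) ^ j / j.factorial

noncomputable def ncChiRatioCoeff (n lam : ℝ) (j : ℕ) : ℝ :=
  ncChiMixingWeight lam j * (Gamma (n / 2) / (2 ^ j * Gamma (n / 2 + j)))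

/-- Clipping `y` at `0` makes the ratio monotone on all of `ℝ`; where `y ≤ 0` both densities
vanish anyway. -/
noncomputable def ncChiRatio (n lam y : ℝ) : ℝ :=
  ∑' j : ℕ, ncChiRatioCoeff n lam j * max y 0 ^ j

theorem ncChiMixingWeight_nonneg (hlam : 0 ≤ lam) (j : ℕ) : 0 ≤ ncChiMixingWeight lam j := by
  unfold ncChiMixingWeight
  positivity

theorem summable_ncChiMixingWeight (lam : ℝ) : Summable (ncChiMixingWeight lam) :=
  ((summable_pow_div_factorial (lam / 2)).mul_left (exp (-lam / 2))).congr fun j ↦ by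
    rw [ncChiMixingWeight, mul_div_assoc]

theorem ncChiRatioCoeff_nonneg (hn : 0 < n) (hlam : 0 ≤ lam) (j : ℕ) :
    0 ≤ ncChiRatioCoeff n lam j := by
  have := ncChiMixingWeight_nonneg hlam j
  have := Gamma_pos_of_pos (half_pos hn)
  have := Gamma_pos_of_pos (add_pos_of_pos_of_nonneg (half_pos hn) j.cast_nonneg)
  unfold ncChiRatioCoeff
  positivity

theorem ncChiRatioCoeff_mul_pow_le (hn : 0 < n) (hlam : 0 ≤ lam) {m : ℝ} (hm : 0 ≤ m) (j : ℕ) :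
    ncChiRatioCoeff n lam j * m ^ j ≤
      exp (-lam / 2) / min (n / 2) 1 * ((lam * m / 4) ^ j / j.factorial) := by
  have hΓj := Gamma_pos_of_pos (add_pos_of_pos_of_nonneg (half_pos hn) j.cast_nonneg)
  have hratio : Gamma (n / 2) / Gamma (n / 2 + j) ≤ (min (n / 2) 1)⁻¹ := by
    rw [div_le_iff₀ hΓj, inv_mul_eq_div, le_div_iff₀ (lt_min (half_pos hn) one_pos), mul_comm]
    exact min_one_mul_Gamma_le_Gamma_add_nat (half_pos hn) j
  calc ncChiRatioCoeff n lam j * m ^ j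
      = exp (-lam / 2) * ((lam * m / 4) ^ j / j.factorial) *
          (Gamma (n / 2) / Gamma (n / 2 + j)) := by
        simp only [ncChiRatioCoeff, ncChiMixingWeight, div_pow, mul_pow]
        field_simp
        rw [show (4 : ℝ) ^ j = 2 ^ (j * 2) by rw [pow_mul']; norm_num]
        ring
    _ ≤ exp (-lam / 2) * ((lam * m / 4) ^ j / j.factorial) * (min (n / 2) 1)⁻¹ := by
        gcongr
    _ = exp (-lam / 2) / min (n / 2) 1 * ((lam * m / 4) ^ j / j.factorial) := by ring

theorem summable_ncChiRatioCoeff_mul_pow (hn : 0 < n) (hlam : 0 ≤ lam) {m : ℝ} (hm : 0 ≤ m) :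
    Summable fun j ↦ ncChiRatioCoeff n lam j * m ^ j :=
  .of_nonneg_of_le (fun j ↦ mul_nonneg (ncChiRatioCoeff_nonneg hn hlam j) (pow_nonneg hm j))
    (ncChiRatioCoeff_mul_pow_le hn hlam hm)
    ((summable_pow_div_factorial _).mul_left _)

theorem monotone_ncChiRatio (hn : 0 < n) (hlam : 0 ≤ lam) : Monotone (ncChiRatio n lam) :=
  fun y y' hy ↦ Summable.tsum_le_tsum
    (fun j ↦ mul_le_mul_of_nonneg_left (pow_le_pow_left₀ (le_max_right y 0)
      (max_le_max_right 0 hy) j) (ncChiRatioCoeff_nonneg hn hlam j))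
    (summable_ncChiRatioCoeff_mul_pow hn hlam (le_max_right y 0))
    (summable_ncChiRatioCoeff_mul_pow hn hlam (le_max_right y' 0))

theorem ncChiMixingWeight_mul_chiPDF (hn : 0 < n) (j : ℕ) (t : ℝ) :
    ncChiMixingWeight lam j * chiPDF (n + 2 * j) t =
      chiPDF n t * (ncChiRatioCoeff n lam j * max t 0 ^ j) := by
  by_cases ht : 0 < t
  · have hΓ := (Gamma_pos_of_pos (half_pos hn)).ne'
    have hΓj := (Gamma_pos_of_pos (add_pos_of_pos_of_nonneg (half_pos hn) j.cast_nonneg)).ne'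
    have hdeg : (n + 2 * j) / 2 = n / 2 + j := by ring
    have hpow : t ^ (n / 2 + j - 1) = t ^ (n / 2 - 1) * t ^ j := by
      rw [add_sub_right_comm, rpow_add ht, rpow_natCast]
    have htwo : (2 : ℝ) ^ (n / 2 + j) = 2 ^ (n / 2) * 2 ^ j := by
      rw [rpow_add two_pos, rpow_natCast]
    simp only [chiPDF, if_pos ht, hdeg, hpow, htwo, max_eq_left ht.le, ncChiRatioCoeff]
    field_simp
  · simp [chiPDF, ht]

theorem ncChiPDF_eq_chiPDF_mul_ncChiRatio (hn : 0 < n) (t : ℝ) :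
    ncChiPDF n lam t = chiPDF n t * ncChiRatio n lam t := by
  simp_rw [ncChiRatio, ← tsum_mul_left, ← ncChiMixingWeight_mul_chiPDF hn]
  rfl

theorem integrable_ncChiPDF (hn : 0 < n) (hlam : 0 ≤ lam) : Integrable (ncChiPDF n lam) := by
  have hpos : ∀ j : ℕ, 0 < n + 2 * j := fun j ↦ by positivity
  refine integrable_tsum_of_nonneg (f := fun j t ↦ ncChiMixingWeight lam j * chiPDF (n + 2 * j) t)
    (fun j ↦ (integrable_chiPDF (hpos j)).const_mul _)
    (fun j t ↦ mul_nonneg (ncChiMixingWeight_nonneg hlam j) (chiPDF_nonneg (hpos j) t)) ?_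
  simpa [integral_const_mul, integral_chiPDF (hpos _)] using summable_ncChiMixingWeight lam

theorem chiSurv_mul_ncChiSurv_le (hn : 0 < n) (hlam : 0 ≤ lam) {x' x : ℝ} (hx : x' ≤ x) :
    chiSurv n x * ncChiSurv n lam x' ≤ chiSurv n x' * ncChiSurv n lam x := by
  have hfactor : ncChiPDF n lam = fun t ↦ chiPDF n t * ncChiRatio n lam t :=
    funext (ncChiPDF_eq_chiPDF_mul_ncChiRatio hn)
  have hint := integrable_ncChiPDF hn hlam
  rw [hfactor] at hint
  simp only [chiSurv, ncChiSurv, hfactor]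
  exact integral_Ioi_mul_integral_Ioi_le_of_monotone hx (chiPDF_nonneg hn)
    (integrable_chiPDF hn).integrableOn hint.integrableOn (monotone_ncChiRatio hn hlam)

end ChiSquared

theorem div_le_div_of_quantile {F G q : ℝ → ℝ} (hG : Antitone G)
    (hFG : ∀ x' x, x' ≤ x → G x * F x' ≤ G x' * F x) {u u' : ℝ} (hu : 0 < u) (huu' : u ≤ u')
    (hqu : G (q u) = u) (hqu' : G (q u') = u') : F (q u') / u' ≤ F (q u) / u := by
  rcases le_or_gt (q u') (q u) with hle | hlt
  · rw [div_le_div_iff₀ (hu.trans_le huu') hu]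
    have := hFG _ _ hle
    rw [hqu, hqu'] at this
    linarith
  · obtain rfl : u = u' := huu'.antisymm (hqu' ▸ hqu ▸ hG hlt.le)
    exact le_rfl

/-- For `n > 0`, `λ ≥ 0` and `0 < u ≤ u' < 1`,
`Pr[χ'²_n(λ) ≥ Ψ̄_n⁻¹(u)]/u ≥ Pr[χ'²_n(λ) ≥ Ψ̄_n⁻¹(u')]/u'`; in particular, for the BH
constants `α_r = r·α₁`, `Pr[χ'²_n(λ) ≥ Ψ̄_n⁻¹(α_{r+1})]/(r+1) ≤ Pr[χ'²_n(λ) ≥ Ψ̄_n⁻¹(α₁)]`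
for all `r ≥ 0`. Here `q` denotes the inverse of `Ψ̄_n` on `(0,1)`. -/
theorem ncChiSurv_div_key_inequality (n lam : ℝ) (hn : 0 < n) (hlam : 0 ≤ lam)
    (q : ℝ → ℝ) (hq : ∀ u ∈ Set.Ioo (0 : ℝ) 1, chiSurv n (q u) = u) :
    (∀ u u' : ℝ, 0 < u → u ≤ u' → u' < 1 →
      ncChiSurv n lam (q u') / u' ≤ ncChiSurv n lam (q u) / u) ∧
    (∀ (α₁ : ℝ) (r : ℕ), 0 < α₁ → ((r : ℝ) + 1) * α₁ < 1 →
      ncChiSurv n lam (q (((r : ℝ) + 1) * α₁)) / ((r : ℝ) + 1) ≤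
        α₁ * (ncChiSurv n lam (q α₁) / α₁)) := by
  have hratio : ∀ u u' : ℝ, 0 < u → u ≤ u' → u' < 1 →
      ncChiSurv n lam (q u') / u' ≤ ncChiSurv n lam (q u) / u := fun u u' hu huu' hu' ↦
    div_le_div_of_quantile (antitone_chiSurv hn) (fun _ _ ↦ chiSurv_mul_ncChiSurv_le hn hlam)
      hu huu' (hq u ⟨hu, huu'.trans_lt hu'⟩) (hq u' ⟨hu.trans_le huu', hu'⟩)
  refine ⟨hratio, fun α₁ r hα hr ↦ ?_⟩
  have hr1 : (1 : ℝ) ≤ r + 1 := le_add_of_nonneg_left r.cast_nonneg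
  calc ncChiSurv n lam (q ((r + 1) * α₁)) / (r + 1)
      = α₁ * (ncChiSurv n lam (q ((r + 1) * α₁)) / ((r + 1) * α₁)) := by
        field_simp
    _ ≤ α₁ * (ncChiSurv n lam (q α₁) / α₁) :=
        mul_le_mul_of_nonneg_left (hratio _ _ hα (le_mul_of_one_le_left hα.le hr1) hr) hα.le
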